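/- Removing a maximal edge (with respect to some fixed linear order) of every cycle of length at most 2r in a graph G on n vertices yields a graph G̃ that is O(n^{1/r})-degenerate and has the same connected components as G; in particular, any spanning forest of G̃ is a spanning forest of G. -/

import Mathlib

open SimpleGraph

/-- The set of edges of `G` that are the `w`-maximum edge of some cycle of `G` of
length at most `2r` (the edge order is given by an injective weight `w`). -/
def MaxShortCycleEdges {V : Type} (G : SimpleGraph V) (w : Sym2 V → ℕ) (r : ℕ) :
    Set (Sym2 V) :=
  {e | ∃ (x : V) (c : G.Walk x x), c.IsCycle ∧ c.length ≤ 2 * r ∧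
    e ∈ c.edges ∧ ∀ e' ∈ c.edges, e' ≠ e → w e' < w e}

/-- `H` is `k`-degenerate: every nonempty finite set of vertices contains a vertex
with at most `k` neighbors inside the set. -/
def Degenerate {V : Type} (H : SimpleGraph V) (k : ℕ) : Prop :=
  ∀ s : Finset V, s.Nonempty → ∃ v ∈ s, {u | u ∈ s ∧ H.Adj v u}.ncard ≤ k

/-- `F` is a spanning forest of `H`: an acyclic spanning subgraph with the same
connected components. -/
def IsSpanningForest {V : Type} (H F : SimpleGraph V) : Prop :=
  F ≤ H ∧ (∀ (x : V) (c : F.Walk x x), ¬ c.IsCycle) ∧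
    ∀ u v : V, F.Reachable u v ↔ H.Reachable u v

/-!
A cycle of length at most `2r` in `G̃` is also one in `G`, so its maximum edge was deleted: `G̃` has
girth greater than `2r`. Each deleted edge is the maximum of a cycle whose other edges are lighter,
so by induction on the weight its endpoints stay connected in `G̃`.

For degeneracy, let every vertex of a graph of girth greater than `2r` have more than `k`
neighbours. Paths ending at a fixed vertex can be prolonged at their start in at least `k` ways
(by girth, only the second vertex of the path is a neighbour of its start on it), so there are at
least `k ^ r` paths of length `r`; two of them with the same start would close a cycle of length at
most `2r`, so their starts are distinct and `k ^ r ≤ n`. Applied to the subgraph induced by any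
vertex set, with `k = 2 ⌈n ^ (1 / r)⌉`, this is impossible.
-/

namespace SimpleGraph

variable {V : Type*} {G H : SimpleGraph V}

lemma Reachable.of_forall_adj_reachable (h : ∀ a b, G.Adj a b → H.Reachable a b) {u v : V}
    (huv : G.Reachable u v) : H.Reachable u v := by
  obtain ⟨p⟩ := huv
  induction p with
  | nil => rfl
  | cons hadj _ ih => exact (h _ _ hadj).trans ih

theorem reachable_deleteEdges_iff_of_forall_mem_cycle {α : Type*} [Preorder α] [WellFoundedLT α]
    {S : Set (Sym2 V)} (w : Sym2 V → α)
    (hS : ∀ e ∈ S, ∃ (x : V) (c : G.Walk x x),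
      c.IsCycle ∧ e ∈ c.edges ∧ ∀ e' ∈ c.edges, e' ≠ e → w e' < w e) {u v : V} :
    (G.deleteEdges S).Reachable u v ↔ G.Reachable u v := by
  refine ⟨fun h => h.mono (G.deleteEdges_le S), Reachable.of_forall_adj_reachable ?_⟩
  suffices key : ∀ x : α, ∀ a b, G.Adj a b → w s(a, b) = x → (G.deleteEdges S).Reachable a b from
    fun a b hab => key _ a b hab rfl
  intro x
  induction x using WellFoundedLT.induction with
  | _ x ih =>
  rintro a b hab rfl
  by_cases he : s(a, b) ∈ S
  swap
  · exact (deleteEdges_adj.mpr ⟨hab, he⟩).reachable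
  obtain ⟨y, c, hc, hec, hmax⟩ := hS _ he
  -- Inside the graph formed by the edges of `c`, the edge `s(a, b)` lies on a cycle.
  let K := fromEdgeSet {f | f ∈ c.edges}
  have hcK : ∀ f ∈ c.edges, f ∈ K.edgeSet := fun f hf => by
    rw [edgeSet_fromEdgeSet]
    exact ⟨hf, G.not_isDiag_of_mem_edgeSet (c.edges_subset_edgeSet hf)⟩
  have hK : (K.deleteEdges {s(a, b)}).Reachable a b :=
    (adj_and_reachable_delete_edges_iff_exists_cycle.mpr
      ⟨y, c.transfer K hcK, hc.transfer hcK, by rwa [c.edges_transfer]⟩).2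
  refine hK.of_forall_adj_reachable fun a' b' hab' => ?_
  simp only [deleteEdges_adj, fromEdgeSet_adj, Set.mem_ofPred_eq, Set.mem_singleton_iff, K] at hab'
  exact ih _ (hmax _ hab'.1.1 hab'.2) a' b' (c.adj_of_mem_edges hab'.1.1) rfl

lemma lt_length_of_lt_egirth {n : ℕ} (hn : (n : ℕ∞) < G.egirth) {a : V} {c : G.Walk a a}
    (hc : c.IsCycle) : n < c.length := by
  exact_mod_cast hn.trans_le (egirth_le_length hc)

lemma Walk.IsPath.notMem_support_of_adj {u v z : V} {p : G.Walk u v} (hp : p.IsPath)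
    (hadj : G.Adj u z) (hz : z ≠ p.snd) (hg : ((p.length + 1 : ℕ) : ℕ∞) < G.egirth) :
    z ∉ p.support := by
  classical
  intro hzp
  have hne : p.takeUntil z hzp ≠ hadj.toWalk := fun h =>
    hz (by rw [← p.snd_takeUntil hadj.ne' hzp, h]; rfl)
  obtain ⟨_, _, _, c, hc, hlen⟩ :=
    (hp.takeUntil hzp).exists_isCycle_length_le_add_of_ne (Walk.IsPath.of_adj hadj) hne
  have := lt_length_of_lt_egirth hg hc
  have := p.length_takeUntil_le_length hzp
  simp only [Adj.toWalk, Walk.length_cons, Walk.length_nil] at hlen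
  omega

section Paths

open Finset

variable [Fintype V] [DecidableRel G.Adj] {k : ℕ}

variable (G) in
def pathsEndingAt [DecidableEq V] (v : V) (i : ℕ) : Finset (Σ u, G.Walk u v) :=
  univ.sigma fun u => {p ∈ G.finsetWalkLength i u v | p.IsPath}

variable [DecidableEq V] {v : V}

@[simp]
lemma mem_pathsEndingAt {i : ℕ} {p : Σ u, G.Walk u v} :
    p ∈ G.pathsEndingAt v i ↔ p.2.length = i ∧ p.2.IsPath := by
  simp [pathsEndingAt, mem_finsetWalkLength_iff, and_comm]

lemma card_pathsEndingAt_le {i : ℕ} (hg : ((2 * i : ℕ) : ℕ∞) < G.egirth) :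
    #(G.pathsEndingAt v i) ≤ Fintype.card V := by
  refine (card_le_card_of_injOn Sigma.fst (fun _ _ => mem_univ _) ?_).trans_eq card_univ
  rintro ⟨u, p⟩ hp ⟨u', q⟩ hq (rfl : u = u')
  obtain ⟨hp_len, hp⟩ : p.length = i ∧ p.IsPath := mem_pathsEndingAt.mp hp
  obtain ⟨hq_len, hq⟩ : q.length = i ∧ q.IsPath := mem_pathsEndingAt.mp hq
  by_contra hne
  have hpq : p ≠ q := fun h => hne (h ▸ rfl)
  obtain ⟨_, _, _, c, hc, hlen⟩ := hp.exists_isCycle_length_le_add_of_ne hq hpq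
  have := lt_length_of_lt_egirth hg hc
  omega

/-- A path `p` of length `i` ending at `v` extends by every neighbour of its start except `p.snd`:
by the girth bound no other neighbour lies on `p`. -/
lemma mul_card_pathsEndingAt_le {i : ℕ} (hδ : ∀ u, k < G.degree u)
    (hg : ((i + 1 : ℕ) : ℕ∞) < G.egirth) :
    k * #(G.pathsEndingAt v i) ≤ #(G.pathsEndingAt v (i + 1)) := by
  classical
  have := card_mul_le_card_mul (m := k) (n := 1)
    (fun (p : Σ u, G.Walk u v) (q : Σ u, G.Walk u v) => ∃ h : G.Adj q.1 p.1, q.2 = .cons h p.2)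
    (s := G.pathsEndingAt v i) (t := G.pathsEndingAt v (i + 1)) ?_ ?_
  · simpa [mul_comm] using this
  · rintro ⟨u, p⟩ hp
    obtain ⟨hlen, hpath⟩ : p.length = i ∧ p.IsPath := mem_pathsEndingAt.mp hp
    calc k ≤ #(G.neighborFinset u) - 1 := by rw [card_neighborFinset_eq_degree]; have := hδ u; omega
      _ ≤ #((G.neighborFinset u).erase p.snd) := pred_card_le_card_erase
      _ ≤ _ := by
        refine card_le_card_of_surjOn Sigma.fst fun z hz => ?_
        simp only [coe_erase, Set.mem_sdiff, mem_coe, mem_neighborFinset, Set.mem_singleton_iff] at hz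
        refine ⟨⟨z, .cons hz.1.symm p⟩, ?_, rfl⟩
        simp only [coe_bipartiteAbove, Set.mem_ofPred_eq, mem_pathsEndingAt, Walk.length_cons,
          Walk.cons_isPath_iff]
        exact ⟨⟨by rw [hlen], hpath, hpath.notMem_support_of_adj hz.1 hz.2 (by rwa [hlen])⟩,
          hz.1.symm, trivial⟩
  · rintro q -
    refine card_le_one.mpr ?_
    rintro ⟨u, p⟩ hp ⟨u', p'⟩ hp'
    simp only [mem_bipartiteBelow] at hp hp'
    obtain ⟨-, h, hq⟩ := hp
    obtain ⟨-, h', hq'⟩ := hp'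
    rw [hq] at hq'
    simp only [Walk.cons.injEq] at hq'
    obtain ⟨rfl, hpp'⟩ := hq'
    rw [eq_of_heq hpp']

lemma pow_le_card_pathsEndingAt (hδ : ∀ u, k < G.degree u) {i : ℕ} (hg : (i : ℕ∞) < G.egirth) :
    k ^ i ≤ #(G.pathsEndingAt v i) := by
  induction i with
  | zero => exact card_pos.mpr ⟨⟨v, .nil⟩, by simp⟩
  | succ i ih =>
    calc k ^ (i + 1) = k * k ^ i := pow_succ' k i
      _ ≤ k * #(G.pathsEndingAt v i) := by
        gcongr
        exact ih (lt_of_le_of_lt (by exact_mod_cast i.le_succ) hg)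
      _ ≤ _ := mul_card_pathsEndingAt_le hδ hg

end Paths

open Finset

variable {r k : ℕ}

theorem pow_le_card_of_lt_degree [Fintype V] [Nonempty V] [DecidableRel G.Adj]
    (hδ : ∀ u, k < G.degree u) (hg : ((2 * r : ℕ) : ℕ∞) < G.egirth) :
    k ^ r ≤ Fintype.card V := by
  classical
  obtain ⟨v⟩ := ‹Nonempty V›
  have hr : (r : ℕ∞) < G.egirth := lt_of_le_of_lt (by exact_mod_cast (by omega : r ≤ 2 * r)) hg
  exact (pow_le_card_pathsEndingAt (v := v) hδ hr).trans (card_pathsEndingAt_le hg)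

lemma ncard_adj_eq_degree_induce (s : Set V) [Fintype s] [DecidableRel G.Adj] {v : V} (hv : v ∈ s) :
    {u | u ∈ s ∧ G.Adj v u}.ncard = (G.induce s).degree ⟨v, hv⟩ := by
  rw [← card_neighborSet_eq_degree, ← Nat.card_eq_fintype_card, Nat.card_coe_set_eq,
    ← Set.ncard_image_of_injective _ Subtype.val_injective]
  congr 1
  ext u
  simp [and_comm]

theorem exists_ncard_adj_le_of_card_lt_pow (hg : ((2 * r : ℕ) : ℕ∞) < G.egirth) {s : Finset V}
    (hs : s.Nonempty) (hk : #s < k ^ r) : ∃ v ∈ s, {u | u ∈ s ∧ G.Adj v u}.ncard ≤ k := by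
  classical
  by_contra! hdeg
  have : Nonempty s := hs.to_subtype
  have hδ : ∀ u, k < (G.induce (s : Set V)).degree u := fun ⟨u, hu⟩ =>
    (ncard_adj_eq_degree_induce (G := G) (s : Set V) hu) ▸ hdeg u hu
  have := pow_le_card_of_lt_degree (G := G.induce (s : Set V)) hδ
    (hg.trans_le (IsContained.egirth_le ⟨Copy.induce G (s : Set V)⟩))
  simp only [coe_sort_coe, Fintype.card_coe] at this
  omega

end SimpleGraph

section MaxShortCycleEdges

variable {V : Type} {G : SimpleGraph V} {w : Sym2 V → ℕ} {r : ℕ}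

theorem reachable_deleteEdges_maxShortCycleEdges_iff {u v : V} :
    (G.deleteEdges (MaxShortCycleEdges G w r)).Reachable u v ↔ G.Reachable u v := by
  refine reachable_deleteEdges_iff_of_forall_mem_cycle w fun e he ↦ ?_
  obtain ⟨x, c, hc, -, hec, hmax⟩ := he
  exact ⟨x, c, hc, hec, hmax⟩

theorem lt_egirth_deleteEdges_maxShortCycleEdges (hw : Function.Injective w) :
    ((2 * r : ℕ) : ℕ∞) < (G.deleteEdges (MaxShortCycleEdges G w r)).egirth := by
  classical
  rw [← ENat.add_one_le_iff (ENat.natCast_ne_top _), le_egirth]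
  intro x c hc
  by_contra! hlen
  have hlen : c.length ≤ 2 * r := by exact_mod_cast Order.le_of_lt_add_one hlen
  have hne : c.edges.toFinset.Nonempty := by
    simpa [List.toFinset_nonempty_iff, Walk.edges_eq_nil] using hc.not_nil
  obtain ⟨e, he, hmax⟩ := c.edges.toFinset.exists_max_image w hne
  rw [List.mem_toFinset] at he
  have hS : e ∈ MaxShortCycleEdges G w r := by
    refine ⟨x, c.mapLe (G.deleteEdges_le _), (Walk.isCycle_mapLe _).mpr hc, by simpa using hlen,
      by simpa [Walk.edges_mapLe_eq_edges] using he, fun e' he' hne => ?_⟩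
    rw [Walk.edges_mapLe_eq_edges] at he'
    exact (hmax e' (List.mem_toFinset.mpr he')).lt_of_ne (hw.ne hne)
  have := c.edges_subset_edgeSet he
  rw [edgeSet_deleteEdges] at this
  exact this.2 hS

end MaxShortCycleEdges

lemma lt_two_mul_ceil_rpow_pow {n r : ℕ} (hr : r ≠ 0) (hn : 0 < n) :
    n < (2 * ⌈(n : ℝ) ^ ((1 : ℝ) / r)⌉₊) ^ r := by
  have hle : n ≤ ⌈(n : ℝ) ^ ((1 : ℝ) / r)⌉₊ ^ r := by
    have := pow_le_pow_left₀ (by positivity) (Nat.le_ceil ((n : ℝ) ^ ((1 : ℝ) / r))) r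
    rw [one_div, Real.rpow_inv_natCast_pow n.cast_nonneg hr, ← one_div] at this
    exact_mod_cast this
  calc n < 2 ^ r * n := lt_mul_left hn (Nat.one_lt_two_pow hr)
    _ ≤ 2 ^ r * ⌈(n : ℝ) ^ ((1 : ℝ) / r)⌉₊ ^ r := by gcongr
    _ = _ := (mul_pow _ _ _).symm

theorem remove_short_cycle_max_edges :
    ∃ C : ℕ, 0 < C ∧ ∀ (V : Type) [Fintype V] (G : SimpleGraph V)
      (w : Sym2 V → ℕ), Function.Injective w → ∀ r : ℕ, 1 ≤ r →
      Degenerate (G.deleteEdges (MaxShortCycleEdges G w r))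
          (C * ⌈(Fintype.card V : ℝ) ^ ((1 : ℝ) / r)⌉₊) ∧
      (∀ u v : V, (G.deleteEdges (MaxShortCycleEdges G w r)).Reachable u v ↔
          G.Reachable u v) ∧
      ∀ F : SimpleGraph V,
        IsSpanningForest (G.deleteEdges (MaxShortCycleEdges G w r)) F →
        IsSpanningForest G F := by
  refine ⟨2, two_pos, fun V _ G w hw r hr => ⟨fun s hs => ?_, fun u v => ?_, fun F hF => ?_⟩⟩
  · have hn : s.card ≤ Fintype.card V := s.card_le_univ
    exact exists_ncard_adj_le_of_card_lt_pow (lt_egirth_deleteEdges_maxShortCycleEdges hw) hs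
      (hn.trans_lt (lt_two_mul_ceil_rpow_pow (by omega) (hs.card_pos.trans_le hn)))
  · exact reachable_deleteEdges_maxShortCycleEdges_iff
  · obtain ⟨hle, hacyclic, hreach⟩ := hF
    exact ⟨hle.trans (G.deleteEdges_le _), hacyclic,
      fun u v => (hreach u v).trans reachable_deleteEdges_maxShortCycleEdges_iff⟩
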